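/- arXiv:1603.08243 — 2 statements merged into one kernel-verified Lean document; each statement's English description precedes it below -/
import Mathlib

section
/- Let X be a compact metric space with at least two points and no isolated points, and let F = {f_1,...,f_k} be a finite family of homeomorphisms of X. If the iterated function system IFS(F) is strongly transitive (i.e., the backward orbit O^-_F(x) = {h^{-1}(x) : h in F^+} is dense in X for every x) but IFS(F) is not forward minimal, then IFS(F) is sensitive: there exists δ > 0 such that for every x in X and every r > 0 there exist y in B(x,r) and a finite composition h of maps from F with d(h(x), h(y)) > δ. -/
open Metric Set

variable {X : Type*} [MetricSpace X]

/-- The semigroup generated by `F`: all finite (nonempty) compositions. -/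
def SemigroupGen (F : Set (X ≃ₜ X)) : Set (X ≃ₜ X) :=
  {h | ∃ l : List (X ≃ₜ X), l ≠ [] ∧ (∀ f ∈ l, f ∈ F) ∧
    h = l.foldr Homeomorph.trans (Homeomorph.refl X)}

def ForwardOrbit (F : Set (X ≃ₜ X)) (x : X) : Set X :=
  {y | ∃ h ∈ SemigroupGen F, y = h x}

def BackwardOrbit (F : Set (X ≃ₜ X)) (x : X) : Set X :=
  {y | ∃ h ∈ SemigroupGen F, y = h.symm x}

def ForwardMinimal (F : Set (X ≃ₜ X)) : Prop := ∀ x : X, Dense (ForwardOrbit F x)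

def StronglyTransitive (F : Set (X ≃ₜ X)) : Prop := ∀ x : X, Dense (BackwardOrbit F x)

def Sensitive (F : Set (X ≃ₜ X)) : Prop :=
  ∃ δ > 0, ∀ x : X, ∀ r > 0, ∃ y ∈ ball x r, ∃ h ∈ SemigroupGen F,
    δ < dist (h x) (h y)

def TopologicallyTransitive (F : Set (X ≃ₜ X)) : Prop :=
  ∀ U V : Set X, IsOpen U → IsOpen V → U.Nonempty → V.Nonempty →
    ∃ h ∈ SemigroupGen F, ((h : X → X) '' U ∩ V).Nonempty

def STransitive (F : Set (X ≃ₜ X)) : Prop :=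
  ∀ U : Set X, IsOpen U → U.Nonempty →
    ∃ (ℓ : ℕ) (T : Fin ℓ → (X ≃ₜ X)), (∀ i, T i ∈ SemigroupGen F) ∧
      (univ : Set X) ⊆ closure (⋃ i, (T i : X → X) '' U)

lemma foldr_trans_append (l m : List (X ≃ₜ X)) :
    (l ++ m).foldr Homeomorph.trans (Homeomorph.refl X) =
      (l.foldr Homeomorph.trans (Homeomorph.refl X)).trans
        (m.foldr Homeomorph.trans (Homeomorph.refl X)) := by
  induction l with
  | nil => ext x; simp
  | cons a l ih =>
    simp only [List.cons_append, List.foldr_cons, ih]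
    ext x; simp

lemma SemigroupGen.trans_mem {F : Set (X ≃ₜ X)} {g w : X ≃ₜ X}
    (hg : g ∈ SemigroupGen F) (hw : w ∈ SemigroupGen F) :
    g.trans w ∈ SemigroupGen F := by
  obtain ⟨l, hl, hlF, rfl⟩ := hg
  obtain ⟨m, hm, hmF, rfl⟩ := hw
  refine ⟨l ++ m, by simp [hl], ?_, (foldr_trans_append l m).symm⟩
  intro f hf
  rcases List.mem_append.mp hf with h | h
  · exact hlF f h
  · exact hmF f h

/-- Theorem (strongly transitive + non-minimal ⟹ sensitive). -/
theorem strongly_transitive_not_minimal_sensitive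
    {X : Type*} [MetricSpace X] [CompactSpace X] [Nontrivial X]
    (hniso : ∀ x : X, ¬ IsOpen ({x} : Set X))
    (F : Set (X ≃ₜ X)) (hF : F.Finite)
    (hst : StronglyTransitive F) (hnm : ¬ ForwardMinimal F) :
    Sensitive F := by
  classical
  -- the semigroup is nonempty
  obtain ⟨p⟩ : Nonempty X := inferInstance
  obtain ⟨-, g0, hg0, -⟩ := (hst p).nonempty
  -- a point with non-dense forward orbit
  rw [ForwardMinimal] at hnm
  push_neg at hnm
  obtain ⟨x0, hx0⟩ := hnm
  set C : Set X := closure (ForwardOrbit F x0) with hC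
  have hCne : C.Nonempty := ⟨g0 x0, subset_closure ⟨g0, hg0, rfl⟩⟩
  obtain ⟨z, hz⟩ : ∃ z, z ∉ C := by
    by_contra h
    push_neg at h
    exact hx0 fun t => h t
  set E : ℝ := infDist z C with hEdef
  have hE : 0 < E := by
    rw [hEdef]
    exact (isClosed_closure.notMem_iff_infDist_pos hCne).mp hz
  refine ⟨E / 3, by positivity, ?_⟩
  by_contra hcon
  push_neg at hcon
  obtain ⟨x, r, hr, hball⟩ := hcon
  -- y1 in the ball, in the backward orbit of q := g0 x0
  obtain ⟨y1, ⟨g, hg, hy1eq⟩, hy1ball⟩ :=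
    (hst (g0 x0)).exists_mem_open isOpen_ball ⟨x, mem_ball_self hr⟩
  -- the image of the backward orbit of z under g.symm is dense
  have hdense : Dense ((g.symm : X → X) '' BackwardOrbit F z) := by
    rw [dense_iff_closure_eq, ← Homeomorph.image_closure,
      dense_iff_closure_eq.mp (hst z), image_univ]
    exact g.symm.surjective.range_eq
  obtain ⟨y2, ⟨zz, ⟨w, hw, hzzeq⟩, hy2eq⟩, hy2ball⟩ :=
    hdense.exists_mem_open isOpen_ball ⟨x, mem_ball_self hr⟩
  have hgw : g.trans w ∈ SemigroupGen F := SemigroupGen.trans_mem hg hw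
  -- distances
  have hd2 : dist ((g.trans w) x) z ≤ E / 3 := by
    have := hball y2 hy2ball (g.trans w) hgw
    have hy2 : (g.trans w) y2 = z := by
      rw [← hy2eq, hzzeq]; simp
    rwa [hy2] at this
  have hd1 : dist ((g.trans w) x) (w (g0 x0)) ≤ E / 3 := by
    have := hball y1 hy1ball (g.trans w) hgw
    have hy1 : (g.trans w) y1 = w (g0 x0) := by
      rw [hy1eq]; simp
    rwa [hy1] at this
  have hmem : w (g0 x0) ∈ C :=
    subset_closure ⟨g0.trans w, SemigroupGen.trans_mem hg0 hw, rfl⟩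
  have hle : E ≤ dist z (w (g0 x0)) := infDist_le_dist_of_mem hmem
  have htri : dist z (w (g0 x0)) ≤ dist ((g.trans w) x) z + dist ((g.trans w) x) (w (g0 x0)) := by
    rw [dist_comm ((g.trans w) x) z]
    exact dist_triangle _ _ _
  linarith
end

section
/- Let X be a compact metric space and F a finite family of homeomorphisms of X. If IFS(F) is strongly transitive, then IFS(F) is S-transitive: for every nonempty open set U there exist T_1, ..., T_ℓ in F^+ with X contained in the closure of T_1(U) ∪ ... ∪ T_ℓ(U). -/
open Metric Set

variable {X : Type*} [MetricSpace X]

/-- Strong transitivity implies S-transitivity. -/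

theorem strongly_transitive_implies_S_transitive
    {X : Type*} [MetricSpace X] [CompactSpace X]
    (F : Set (X ≃ₜ X)) (hF : F.Finite) (hst : StronglyTransitive F) :
    STransitive F := by
  intro U hU hUne
  -- every point is in some h '' U
  have hcov : (univ : Set X) ⊆ ⋃ h : SemigroupGen F, ((h : X ≃ₜ X) : X → X) '' U := by
    intro x _
    obtain ⟨y, ⟨h, hh, rfl⟩, hyU⟩ := (hst x).exists_mem_open hU hUne
    exact mem_iUnion.2 ⟨⟨h, hh⟩, ⟨h.symm x, hyU, h.apply_symm_apply x⟩⟩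
  obtain ⟨t, ht⟩ := isCompact_univ.elim_finite_subcover
    (fun h : SemigroupGen F => ((h : X ≃ₜ X) : X → X) '' U)
    (fun h => (h : X ≃ₜ X).isOpenMap U hU) hcov
  set l := t.toList
  refine ⟨l.length, fun i => ((l.get i : SemigroupGen F) : X ≃ₜ X),
    fun i => (l.get i).2, ?_⟩
  refine ht.trans ((subset_closure).trans' ?_)
  intro x hx
  obtain ⟨h, hht, hxh⟩ := mem_iUnion₂.1 hx
  have : h ∈ l := Finset.mem_toList.2 hht
  obtain ⟨i, hi⟩ := List.get_of_mem this
  exact mem_iUnion.2 ⟨i, by show x ∈ ⇑(↑(l.get i) : X ≃ₜ X) '' U; rw [hi]; exact hxh⟩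
end
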